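/- Suppose d := inf_{t ∈ ℝ} |sin(π(γ(t) − iη))| > 0. Then ∫_ℝ |f(γ(t))| dt is finite and |∫_{C_sd} f(z) dz| ≤ ∫_ℝ |f(γ(t))| dt ≤ (b₀ / d^{k}) · e^{−πδ z_st²} · e^{a₀ |z_st|} · √(π/(r|A|)) · ( e^{a₊²/(4r|A|)} + e^{a₋²/(4r|A|)} ), where a₊ = √2·π·δ·z_st + a₀ and a₋ = √2·π·δ·z_st − a₀. -/

import Mathlib

open Filter MeasureTheory

/-- The phase function `Q_m(z) = i(Az² + Bz) + 2πimz`. -/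
noncomputable def phaseQ (A B : ℝ) (m : ℤ) (z : ℂ) : ℂ :=
  Complex.I * ((A : ℂ) * z ^ 2 + (B : ℂ) * z) + 2 * (Real.pi : ℂ) * Complex.I * (m : ℂ) * z

/-- The stationary point `z_st = −(2πm + B)/(2A)` of `Q_m`. -/
noncomputable def zst (A B : ℝ) (m : ℤ) : ℝ :=
  -(2 * Real.pi * (m : ℝ) + B) / (2 * A)

/-- The direction `e^{iπ·sign(A)/4}` of the steepest descent contour. -/
noncomputable def sdDir (A : ℝ) : ℂ :=
  Complex.exp (Complex.I * (Real.pi : ℂ) * ((Real.sign A : ℝ) : ℂ) / 4)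

/-- The steepest descent contour `γ(t) = t·e^{iπ·sign(A)/4} + z_st` through `z_st`. -/
noncomputable def sdContour (A B : ℝ) (m : ℤ) (t : ℝ) : ℂ :=
  (t : ℂ) * sdDir A + ((zst A B m : ℝ) : ℂ)

/-- The integrand `f(z) = e^{−πδz²} q(z) e^{rQ_m(z)} / sin^k(π(z − iη))`. -/
noncomputable def integrandF (A B r δ η : ℝ) (m : ℤ) (k : ℕ) (q : ℂ → ℂ) (z : ℂ) : ℂ :=
  Complex.exp (-((Real.pi * δ : ℝ) : ℂ) * z ^ 2) * q z *
      Complex.exp ((r : ℂ) * phaseQ A B m z) /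
    Complex.sin ((Real.pi : ℂ) * (z - Complex.I * (η : ℂ))) ^ k

/- ### Auxiliary lemmas -/

lemma gauss_int (c β : ℝ) (hc : 0 < c) :
    Integrable (fun t : ℝ => Real.exp (-c * t ^ 2 + β * t)) ∧
    (∫ t : ℝ, Real.exp (-c * t ^ 2 + β * t)) =
      Real.sqrt (Real.pi / c) * Real.exp (β ^ 2 / (4 * c)) := by
  have key : ∀ t : ℝ, Real.exp (-c * t ^ 2 + β * t) =
      Real.exp (β ^ 2 / (4 * c)) * Real.exp (-c * (t - β / (2 * c)) ^ 2) := by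
    intro t
    rw [← Real.exp_add]
    congr 1
    field_simp
    ring
  constructor
  · simp_rw [key]
    exact (((integrable_exp_neg_mul_sq hc).comp_sub_right (β / (2 * c))).const_mul _)
  · simp_rw [key]
    rw [MeasureTheory.integral_const_mul,
      integral_sub_right_eq_self (fun t : ℝ => Real.exp (-c * t ^ 2)) (β / (2 * c)),
      integral_gaussian]
    ring

lemma sdDir_alt (A : ℝ) :
    sdDir A = Complex.exp (((Real.pi * Real.sign A / 4 : ℝ) : ℂ) * Complex.I) := by
  unfold sdDir; push_cast; ring_nf

lemma sdDir_norm (A : ℝ) : ‖sdDir A‖ = 1 := by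
  rw [sdDir_alt, Complex.norm_exp_ofReal_mul_I]

lemma sdDir_props (A : ℝ) (hA : A ≠ 0) :
    sdDir A = ((Real.sqrt 2 / 2 : ℝ) : ℂ) +
        ((Real.sign A * (Real.sqrt 2 / 2) : ℝ) : ℂ) * Complex.I := by
  rw [sdDir_alt, Complex.exp_mul_I, ← Complex.ofReal_cos, ← Complex.ofReal_sin]
  rcases hA.lt_or_gt with h | h
  · rw [Real.sign_of_neg h]
    have h1 : Real.pi * (-1) / 4 = -(Real.pi / 4) := by ring
    rw [h1, Real.cos_neg, Real.sin_neg, Real.cos_pi_div_four, Real.sin_pi_div_four]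
    push_cast; ring
  · rw [Real.sign_of_pos h]
    have h1 : Real.pi * 1 / 4 = Real.pi / 4 := by ring
    rw [h1, Real.cos_pi_div_four, Real.sin_pi_div_four]
    push_cast; ring

lemma sdDir_sq (A : ℝ) (hA : A ≠ 0) :
    sdDir A ^ 2 = ((Real.sign A : ℝ) : ℂ) * Complex.I := by
  have h2 : ((Real.sqrt 2 : ℝ) : ℂ) ^ 2 = 2 := by
    norm_cast
    rw [Real.sq_sqrt]; norm_num
  have hs : ((Real.sign A : ℝ) : ℂ) ^ 2 = 1 := by
    norm_cast
    rcases hA.lt_or_gt with h | h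
    · rw [Real.sign_of_neg h]; norm_num
    · rw [Real.sign_of_pos h]; norm_num
  rw [sdDir_props A hA]
  push_cast
  have : (((Real.sqrt 2 : ℝ) : ℂ) / 2 + ↑(Real.sign A) * (↑(Real.sqrt 2) / 2) * Complex.I) ^ 2
      = (((Real.sqrt 2 : ℝ) : ℂ)) ^ 2 / 4 * (1 + ((Real.sign A : ℝ) : ℂ) ^ 2 * Complex.I ^ 2)
        + ((Real.sqrt 2 : ℝ) : ℂ) ^ 2 / 2 * ((Real.sign A : ℝ) : ℂ) * Complex.I := by ring
  rw [this, h2, hs, Complex.I_sq]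
  ring

lemma key_re (A B δ r : ℝ) (m : ℤ) (hA : A ≠ 0) (t : ℝ) :
    (-((Real.pi * δ : ℝ) : ℂ) * (sdContour A B m t) ^ 2 +
      (r : ℂ) * phaseQ A B m (sdContour A B m t)).re
    = -(r * |A|) * t ^ 2 - Real.sqrt 2 * Real.pi * δ * zst A B m * t
        - Real.pi * δ * zst A B m ^ 2 := by
  set z := zst A B m with hz
  set ω := sdDir A with hωdef
  have hB2 : ((B : ℂ) + 2 * (Real.pi : ℂ) * (m : ℂ)) = -(2 * (A : ℂ) * (z : ℂ)) := by
    have : B + 2 * Real.pi * (m : ℝ) = -(2 * A * z) := by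
      rw [hz]; unfold zst; field_simp; ring
    calc ((B : ℂ) + 2 * (Real.pi : ℂ) * (m : ℂ)) = ((B + 2 * Real.pi * (m:ℝ) : ℝ) : ℂ) := by
          push_cast; ring
      _ = -(2 * (A : ℂ) * (z : ℂ)) := by rw [this]; push_cast; ring
  have hQ : phaseQ A B m (sdContour A B m t)
      = Complex.I * (A : ℂ) * ((t : ℂ) ^ 2 * ω ^ 2 - (z : ℂ) ^ 2) := by
    have h1 : phaseQ A B m (sdContour A B m t)
        = Complex.I * ((A:ℂ) * (sdContour A B m t) ^ 2
            + ((B : ℂ) + 2 * (Real.pi : ℂ) * (m : ℂ)) * (sdContour A B m t)) := by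
      unfold phaseQ; ring
    rw [h1, hB2]
    show Complex.I * (↑A * ((t:ℂ) * ω + (z:ℂ)) ^ 2 + -(2 * ↑A * ↑z) * ((t:ℂ) * ω + ↑z)) = _
    ring
  have expand : (-((Real.pi * δ : ℝ) : ℂ) * (sdContour A B m t) ^ 2 +
      (r : ℂ) * phaseQ A B m (sdContour A B m t))
      = -((Real.pi * δ : ℝ) : ℂ) * ((t:ℂ)^2 * ω^2 + 2*(t:ℂ)*(z:ℂ)*ω + (z:ℂ)^2)
        + (r:ℂ) * (Complex.I * (A : ℂ) * ((t : ℂ) ^ 2 * ω ^ 2 - (z : ℂ) ^ 2)) := by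
    rw [hQ]
    show -((Real.pi * δ : ℝ) : ℂ) * ((t:ℂ) * ω + (z:ℂ)) ^ 2 + _ = _
    ring
  rw [expand, sdDir_sq A hA, hωdef, sdDir_props A hA]
  have hAs : A * Real.sign A = |A| := by
    rcases hA.lt_or_gt with h | h
    · rw [Real.sign_of_neg h, abs_of_neg h]; ring
    · rw [Real.sign_of_pos h, abs_of_pos h]; ring
  simp only [Complex.add_re, Complex.mul_re, Complex.mul_im, Complex.neg_re, Complex.neg_im,
    Complex.I_re, Complex.I_im, Complex.ofReal_re, Complex.ofReal_im, Complex.add_im,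
    Complex.sub_re, Complex.sub_im, ← Complex.ofReal_pow, Complex.re_ofNat, Complex.im_ofNat]
  linear_combination (-(r * t ^ 2)) * hAs

/-- If `d > 0` is a lower bound for `|sin(π(γ(t) − iη))|` on the steepest descent contour,
then `∫_ℝ |f(γ(t))| dt` is finite, and
`|∫_{C_sd} f| ≤ ∫_ℝ |f∘γ| ≤ (b₀/d^k) e^{−πδz_st²} e^{a₀|z_st|} √(π/(r|A|))
  (e^{a₊²/(4r|A|)} + e^{a₋²/(4r|A|)})` with `a_± = √2·π·δ·z_st ± a₀`. -/
theorem steepest_descent_integral_bound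
    (A B r : ℝ) (hA : A ≠ 0) (hr : 0 < r) (m : ℤ) (k : ℕ) (hk : 1 ≤ k)
    (δ η : ℝ) (hδ : 0 < δ) (hη : 0 < η)
    (q : ℂ → ℂ) (hq : Differentiable ℂ q)
    (a₀ b₀ : ℝ) (ha₀ : 0 < a₀) (hb₀ : 0 < b₀)
    (hq_bound : ∀ z : ℂ, ‖q z‖ ≤ b₀ * Real.exp (a₀ * ‖z‖))
    (d : ℝ) (hd : 0 < d)
    (hd_low : ∀ t : ℝ,
      d ≤ ‖Complex.sin ((Real.pi : ℂ) * (sdContour A B m t - Complex.I * (η : ℂ)))‖) :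
    Integrable (fun t : ℝ => integrandF A B r δ η m k q (sdContour A B m t)) ∧
    ‖sdDir A * ∫ t : ℝ, integrandF A B r δ η m k q (sdContour A B m t)‖ ≤
      ∫ t : ℝ, ‖integrandF A B r δ η m k q (sdContour A B m t)‖ ∧
    (∫ t : ℝ, ‖integrandF A B r δ η m k q (sdContour A B m t)‖) ≤
      b₀ / d ^ k * Real.exp (-Real.pi * δ * zst A B m ^ 2) *
        Real.exp (a₀ * |zst A B m|) * Real.sqrt (Real.pi / (r * |A|)) *
        (Real.exp ((Real.sqrt 2 * Real.pi * δ * zst A B m + a₀) ^ 2 / (4 * r * |A|)) +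
          Real.exp ((Real.sqrt 2 * Real.pi * δ * zst A B m - a₀) ^ 2 / (4 * r * |A|))) := by
  set z : ℝ := zst A B m with hzdef
  set c : ℝ := r * |A| with hcdef
  have hc : 0 < c := mul_pos hr (abs_pos.mpr hA)
  set β : ℝ := -(Real.sqrt 2 * Real.pi * δ * z) with hβdef
  set C : ℝ := b₀ / d ^ k * Real.exp (-Real.pi * δ * z ^ 2) * Real.exp (a₀ * |z|) with hCdef
  set g : ℝ → ℝ := fun t =>
    Real.exp (-c * t ^ 2 + (β + a₀) * t) + Real.exp (-c * t ^ 2 + (β - a₀) * t) with hgdef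
  have hDne : ∀ t : ℝ, Complex.sin ((Real.pi : ℂ) * (sdContour A B m t - Complex.I * (η : ℂ)))
      ≠ 0 := by
    intro t h
    have := hd_low t
    rw [h, norm_zero] at this
    exact absurd (lt_of_lt_of_le hd this) (lt_irrefl 0)
  -- pointwise bound
  have hptw : ∀ t : ℝ, ‖integrandF A B r δ η m k q (sdContour A B m t)‖ ≤ C * g t := by
    intro t
    have hγnorm : ‖sdContour A B m t‖ ≤ |t| + |z| := by
      unfold sdContour
      refine le_trans (norm_add_le _ _) ?_
      rw [norm_mul, sdDir_norm, Complex.norm_real, Complex.norm_real, mul_one]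
      simp [Real.norm_eq_abs, hzdef]
    have hN : Complex.exp (-((Real.pi * δ : ℝ) : ℂ) * (sdContour A B m t) ^ 2) *
          q (sdContour A B m t) *
          Complex.exp ((r : ℂ) * phaseQ A B m (sdContour A B m t))
        = Complex.exp (-((Real.pi * δ : ℝ) : ℂ) * (sdContour A B m t) ^ 2 +
            (r : ℂ) * phaseQ A B m (sdContour A B m t)) * q (sdContour A B m t) := by
      rw [Complex.exp_add]; ring
    have hNnorm : ‖Complex.exp (-((Real.pi * δ : ℝ) : ℂ) * (sdContour A B m t) ^ 2) *
          q (sdContour A B m t) *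
          Complex.exp ((r : ℂ) * phaseQ A B m (sdContour A B m t))‖
        = Real.exp (-c * t ^ 2 + β * t - Real.pi * δ * z ^ 2) * ‖q (sdContour A B m t)‖ := by
      rw [hN, norm_mul, Complex.norm_exp, key_re A B δ r m hA t]
      rw [← hzdef]
      congr 2
      rw [hcdef, hβdef]; ring
    have hqb : ‖q (sdContour A B m t)‖ ≤ b₀ * Real.exp (a₀ * (|t| + |z|)) := by
      refine le_trans (hq_bound _) ?_
      have := Real.exp_le_exp.mpr (mul_le_mul_of_nonneg_left hγnorm ha₀.le)
      nlinarith [Real.exp_pos (a₀ * ‖sdContour A B m t‖), this, hb₀]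
    have habs : Real.exp (-c * t ^ 2 + β * t + a₀ * |t|) ≤ g t := by
      rw [hgdef]
      rcases abs_cases t with ⟨h1, _⟩ | ⟨h1, _⟩
      · rw [h1]
        have e1 : -c * t ^ 2 + β * t + a₀ * t = -c * t ^ 2 + (β + a₀) * t := by ring
        rw [e1]
        exact le_add_of_nonneg_right (Real.exp_pos _).le
      · rw [h1]
        have e1 : -c * t ^ 2 + β * t + a₀ * (-t) = -c * t ^ 2 + (β - a₀) * t := by ring
        rw [e1]
        exact le_add_of_nonneg_left (Real.exp_pos _).le
    unfold integrandF
    rw [norm_div, norm_pow]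
    calc ‖Complex.exp (-((Real.pi * δ : ℝ) : ℂ) * (sdContour A B m t) ^ 2) *
              q (sdContour A B m t) *
              Complex.exp ((r : ℂ) * phaseQ A B m (sdContour A B m t))‖ /
            ‖Complex.sin ((Real.pi : ℂ) * (sdContour A B m t - Complex.I * (η : ℂ)))‖ ^ k
        ≤ Real.exp (-c * t ^ 2 + β * t - Real.pi * δ * z ^ 2) *
            (b₀ * Real.exp (a₀ * (|t| + |z|))) / d ^ k := by
          rw [hNnorm]
          apply div_le_div₀
          · positivity
          · exact mul_le_mul_of_nonneg_left hqb (Real.exp_pos _).le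
          · exact pow_pos hd k
          · exact pow_le_pow_left₀ hd.le (hd_low t) k
      _ = C * Real.exp (-c * t ^ 2 + β * t + a₀ * |t|) := by
          have e0 : Real.exp (-c * t ^ 2 + β * t - Real.pi * δ * z ^ 2)
              = Real.exp (-Real.pi * δ * z ^ 2) * Real.exp (-c * t ^ 2 + β * t) := by
            rw [← Real.exp_add]; congr 1; ring
          have e2 : Real.exp (a₀ * (|t| + |z|))
              = Real.exp (a₀ * |z|) * Real.exp (a₀ * |t|) := by
            rw [← Real.exp_add]; congr 1; ring
          have e3 : Real.exp (-c * t ^ 2 + β * t + a₀ * |t|)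
              = Real.exp (-c * t ^ 2 + β * t) * Real.exp (a₀ * |t|) := by
            rw [← Real.exp_add]
          rw [hCdef, e0, e2, e3]
          ring
      _ ≤ C * g t := by
          apply mul_le_mul_of_nonneg_left habs
          rw [hCdef]; positivity
  -- continuity
  have hγcont : Continuous (sdContour A B m) := by
    unfold sdContour; fun_prop
  have hcont : Continuous (fun t : ℝ => integrandF A B r δ η m k q (sdContour A B m t)) := by
    unfold integrandF
    apply Continuous.div
    · apply Continuous.mul
      · apply Continuous.mul
        · exact Complex.continuous_exp.comp (by fun_prop)
        · exact hq.continuous.comp hγcont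
      · apply Complex.continuous_exp.comp
        apply Continuous.mul continuous_const
        unfold phaseQ
        fun_prop
    · fun_prop
    · intro t
      exact pow_ne_zero k (hDne t)
  -- integrability of the dominating function
  have hgint : Integrable g :=
    (gauss_int c (β + a₀) hc).1.add (gauss_int c (β - a₀) hc).1
  have hCgint : Integrable (fun t => C * g t) := hgint.const_mul C
  have hint : Integrable (fun t : ℝ => integrandF A B r δ η m k q (sdContour A B m t)) :=
    Integrable.mono' hCgint hcont.aestronglyMeasurable (ae_of_all _ hptw)
  refine ⟨hint, ?_, ?_⟩
  · rw [norm_mul, sdDir_norm, one_mul]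
    exact norm_integral_le_integral_norm _
  · calc (∫ t : ℝ, ‖integrandF A B r δ η m k q (sdContour A B m t)‖)
        ≤ ∫ t : ℝ, C * g t := integral_mono hint.norm hCgint hptw
      _ = C * ((∫ t : ℝ, Real.exp (-c * t ^ 2 + (β + a₀) * t)) +
            ∫ t : ℝ, Real.exp (-c * t ^ 2 + (β - a₀) * t)) := by
          rw [MeasureTheory.integral_const_mul]
          congr 1
          exact integral_add (gauss_int c (β + a₀) hc).1 (gauss_int c (β - a₀) hc).1
      _ = _ := by
          rw [(gauss_int c (β + a₀) hc).2, (gauss_int c (β - a₀) hc).2]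
          have e1 : (β + a₀) ^ 2 / (4 * c)
              = (Real.sqrt 2 * Real.pi * δ * z - a₀) ^ 2 / (4 * r * |A|) := by
            rw [hβdef, hcdef]; ring
          have e2 : (β - a₀) ^ 2 / (4 * c)
              = (Real.sqrt 2 * Real.pi * δ * z + a₀) ^ 2 / (4 * r * |A|) := by
            rw [hβdef, hcdef]; ring
          rw [e1, e2, hCdef, hcdef]
          ring
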